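/- Let φ = P₁⋯Pₙ¬x be a hybrid formula where each P_i is an operator from {◇,□} ∪ {↓y. : y a state variable}, x is a state variable bound in φ, and let m be the largest index with P_m = ↓x.. Then φ is satisfiable over the class of ER frames if and only if there exists j with m < j ≤ n such that P_j ∈ {◇,□} and the largest such j satisfies P_j = ◇ (i.e., the last modal operator occurring after the binder of x is ◇). -/

import Mathlib

/-- Hybrid logic formulas over countable sets of atomic propositions,
nominals and state variables (each indexed by `ℕ`). -/
inductive HForm : Type where
  | prop : ℕ → HForm
  | nom  : ℕ → HForm
  | svar : ℕ → HForm
  | top  : HForm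
  | bot  : HForm
  | neg  : HForm → HForm
  | and  : HForm → HForm → HForm
  | or   : HForm → HForm → HForm
  | dia  : HForm → HForm
  | box  : HForm → HForm
  | bind : ℕ → HForm → HForm
  | atN  : ℕ → HForm → HForm
  | atV  : ℕ → HForm → HForm
deriving DecidableEq

/-- A (hybrid) Kripke structure: states, transition relation, labeling of
propositions by sets of states and of nominals by (single) states. -/
structure Kripke (W : Type) where
  rel : W → W → Prop
  vProp : ℕ → Set W
  vNom : ℕ → W

/-- Update of an assignment: `updAsg g x w` is the `x`-variant of `g` mapping `x` to `w`. -/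
def updAsg {W : Type} (g : ℕ → W) (x : ℕ) (w : W) : ℕ → W :=
  fun y => if y = x then w else g y

/-- The satisfaction relation `K, g, w ⊨ φ`. -/
def Sat {W : Type} (K : Kripke W) : (ℕ → W) → W → HForm → Prop
  | _, w, .prop p => w ∈ K.vProp p
  | _, w, .nom i => w = K.vNom i
  | g, w, .svar x => w = g x
  | _, _, .top => True
  | _, _, .bot => False
  | g, w, .neg φ => ¬ Sat K g w φ
  | g, w, .and φ ψ => Sat K g w φ ∧ Sat K g w ψ
  | g, w, .or φ ψ => Sat K g w φ ∨ Sat K g w ψ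
  | g, w, .dia φ => ∃ v, K.rel w v ∧ Sat K g v φ
  | g, w, .box φ => ∀ v, K.rel w v → Sat K g v φ
  | g, w, .bind x φ => Sat K (updAsg g x w) w φ
  | g, _, .atN i φ => Sat K g (K.vNom i) φ
  | g, _, .atV x φ => Sat K g (g x) φ

/-- Satisfiability over the class of all frames. -/
def SatisfiableAll (φ : HForm) : Prop :=
  ∃ (W : Type) (K : Kripke W) (g : ℕ → W) (w : W), Sat K g w φ

/-- Satisfiability over the class of transitive frames. -/
def SatisfiableTrans (φ : HForm) : Prop :=
  ∃ (W : Type) (K : Kripke W), Transitive K.rel ∧ ∃ (g : ℕ → W) (w : W), Sat K g w φ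

/-- Satisfiability over the class of total frames. -/
def SatisfiableTotal (φ : HForm) : Prop :=
  ∃ (W : Type) (K : Kripke W), (∀ w, ∃ v, K.rel w v) ∧ ∃ (g : ℕ → W) (w : W), Sat K g w φ

/-- Satisfiability over the class of ER frames. -/
def SatisfiableER (φ : HForm) : Prop :=
  ∃ (W : Type) (K : Kripke W), Equivalence K.rel ∧ ∃ (g : ℕ → W) (w : W), Sat K g w φ

/-- The singleton reflexive Kripke structure `K₁` labeling every proposition and
nominal with its unique state. -/
def K1 : Kripke Unit := ⟨fun _ _ => True, fun _ => Set.univ, fun _ => ()⟩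

/-- The assignment `g₁` mapping every state variable to the unique state of `K₁`. -/
def g1 : ℕ → Unit := fun _ => ()

/-- Unary operators of hybrid logic: `◇`, `□`, `↓x.`, `@_i` (nominal), `@_x` (state variable). -/
inductive HOp : Type where
  | dia : HOp
  | box : HOp
  | bind : ℕ → HOp
  | atN : ℕ → HOp
  | atV : ℕ → HOp
deriving DecidableEq

def applyOp : HOp → HForm → HForm
  | .dia, φ => .dia φ
  | .box, φ => .box φ
  | .bind x, φ => .bind x φ
  | .atN i, φ => .atN i φ
  | .atV x, φ => .atV x φ

/-- Apply a sequence of operators to a formula (head of the list outermost). -/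
def applyOps : List HOp → HForm → HForm
  | [], φ => φ
  | o :: os, φ => applyOp o (applyOps os φ)

/-- The operator is `◇`, `□` or a binder `↓y.` (no satisfaction operators). -/
def IsModalOrBind : HOp → Prop
  | .dia => True
  | .box => True
  | .bind _ => True
  | _ => False

/-!
If `↓x.` is followed by binders only, `¬x` is evaluated at the state just named `x`, so it fails.
If the last modal operator after `↓x.` is `□`, then, since binders after `↓x.` leave `x` alone and
`R` is an equivalence, every state reached from the binding point stays `R`-related to the value
of `x`; the final `□` therefore reaches that value, where `¬x` fails. If it is `◇`, then on the
complete frame with two states the `◇` can always move away from the value of `x`, so the formula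
holds everywhere.
-/

theorem List.forall_or_eq_append_cons_forall {α : Type*} (q : α → Prop) (l : List α) :
    (∀ a ∈ l, q a) ∨ ∃ l₁ a l₂, l = l₁ ++ a :: l₂ ∧ ¬ q a ∧ ∀ b ∈ l₂, q b := by
  induction l with
  | nil => exact Or.inl (by simp)
  | cons a t ih =>
    rcases ih with h | ⟨l₁, b, l₂, rfl, hb, h₂⟩
    · by_cases ha : q a
      · exact Or.inl (List.forall_mem_cons.2 ⟨ha, h⟩)
      · exact Or.inr ⟨[], a, t, rfl, ha, h⟩
    · exact Or.inr ⟨a :: l₁, b, l₂, rfl, hb, h₂⟩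

theorem applyOps_append (l₁ l₂ : List HOp) (φ : HForm) :
    applyOps (l₁ ++ l₂) φ = applyOps l₁ (applyOps l₂ φ) := by
  induction l₁ with
  | nil => rfl
  | cons o t ih => simp only [List.cons_append, applyOps, ih]

theorem exists_eq_bind_ne_of_forall_not_modal {x : ℕ} {l : List HOp}
    (hops : ∀ o ∈ l, IsModalOrBind o) (hnm : ∀ o ∈ l, o ≠ HOp.dia ∧ o ≠ HOp.box)
    (hx : HOp.bind x ∉ l) :
    ∀ o ∈ l, ∃ y ≠ x, o = HOp.bind y := by
  intro o ho
  cases o with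
  | dia => exact absurd rfl (hnm _ ho).1
  | box => exact absurd rfl (hnm _ ho).2
  | bind y => exact ⟨y, fun hyx => hx (hyx ▸ ho), rfl⟩
  | atN i => exact (hops _ ho).elim
  | atV y => exact (hops _ ho).elim

section Kripke

variable {W : Type} (K : Kripke W)

theorem sat_applyOps_neg_svar_iff {x : ℕ} {l : List HOp} (hl : ∀ o ∈ l, ∃ y ≠ x, o = HOp.bind y)
    (g : ℕ → W) (w : W) :
    Sat K g w (applyOps l (.neg (.svar x))) ↔ w ≠ g x := by
  induction l generalizing g with
  | nil => rfl
  | cons o t ih =>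
    obtain ⟨y, hyx, rfl⟩ := hl o List.mem_cons_self
    simp only [applyOps, applyOp, Sat]
    rw [ih (fun o ho => hl o (List.mem_cons_of_mem _ ho))]
    simp [updAsg, hyx.symm]

theorem exists_sat_of_sat_applyOps (hrefl : ∀ w, K.rel w w) {l : List HOp} {φ : HForm}
    {g : ℕ → W} {w : W} (h : Sat K g w (applyOps l φ)) :
    ∃ g' w', Sat K g' w' φ := by
  induction l generalizing g w with
  | nil => exact ⟨g, w, h⟩
  | cons o t ih =>
    cases o <;> simp only [applyOps, applyOp, Sat] at h
    case dia =>
      obtain ⟨_, _, hv⟩ := h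
      exact ih hv
    case box => exact ih (h w (hrefl w))
    all_goals exact ih h

theorem exists_sat_rel_svar_of_sat_applyOps (hE : Equivalence K.rel) {x : ℕ} {l : List HOp}
    (hops : ∀ o ∈ l, IsModalOrBind o) (hx : HOp.bind x ∉ l) {φ : HForm} {g : ℕ → W} {w : W}
    (hw : K.rel w (g x)) (h : Sat K g w (applyOps l φ)) :
    ∃ g' w', K.rel w' (g' x) ∧ Sat K g' w' φ := by
  induction l generalizing g w with
  | nil => exact ⟨g, w, hw, h⟩
  | cons o t ih =>
    have hops' : ∀ o ∈ t, IsModalOrBind o := fun o ho => hops o (List.mem_cons_of_mem _ ho)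
    have hx' : HOp.bind x ∉ t := fun hxt => hx (List.mem_cons_of_mem _ hxt)
    cases o <;> simp only [applyOps, applyOp, Sat] at h
    case dia =>
      obtain ⟨v, hwv, hv⟩ := h
      exact ih hops' hx' (hE.trans (hE.symm hwv) hw) hv
    case box => exact ih hops' hx' hw (h w (hE.refl w))
    case bind y =>
      have hyx : x ≠ y := fun hxy => hx (hxy ▸ List.mem_cons_self)
      exact ih hops' hx' (by simpa [updAsg, hyx] using hw) h
    case atN => exact (hops _ List.mem_cons_self).elim
    case atV => exact (hops _ List.mem_cons_self).elim

theorem sat_applyOps_of_forall_sat (hser : ∀ w, ∃ v, K.rel w v) {φ : HForm}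
    (hφ : ∀ g w, Sat K g w φ) (l : List HOp) (g : ℕ → W) (w : W) :
    Sat K g w (applyOps l φ) := by
  induction l generalizing g w with
  | nil => exact hφ g w
  | cons o t ih =>
    cases o <;> simp only [applyOps, applyOp, Sat]
    case dia => exact ⟨(hser w).choose, (hser w).choose_spec, ih g _⟩
    case box => exact fun v _ => ih g v
    all_goals exact ih _ _

end Kripke

def completeBool : Kripke Bool := ⟨fun _ _ => True, fun _ => Set.univ, fun _ => false⟩

theorem completeBool_equivalence : Equivalence completeBool.rel :=
  ⟨fun _ => trivial, fun _ => trivial, fun _ _ => trivial⟩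

/-- Let `φ = P₁⋯Pₙ¬x` with each `Pᵢ ∈ {◇,□} ∪ {↓y.}`, where `x` is
bound in `φ` and `Pₘ = ↓x.` is its last binder (i.e. `ops = l₁ ++ ↓x. :: l₂` with
`↓x. ∉ l₂`). Then `φ` is satisfiable over the class of ER frames iff some operator
strictly after position `m` is a modal operator and the last such operator is `◇`. -/
theorem neg_bound_var_sat_ER (x : ℕ) (l₁ l₂ : List HOp)
    (hops : ∀ o ∈ l₁ ++ HOp.bind x :: l₂, IsModalOrBind o)
    (hlast : HOp.bind x ∉ l₂) :
    SatisfiableER (applyOps (l₁ ++ HOp.bind x :: l₂) (HForm.neg (HForm.svar x))) ↔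
      ∃ l₃ l₄ : List HOp, l₂ = l₃ ++ HOp.dia :: l₄ ∧
        ∀ o ∈ l₄, o ≠ HOp.dia ∧ o ≠ HOp.box := by
  have hops₂ : ∀ o ∈ l₂, IsModalOrBind o := fun o ho => hops o (by simp [ho])
  have hsuffix : ∀ {l₃ m l₄}, l₂ = l₃ ++ m :: l₄ → (∀ o ∈ l₄, o ≠ HOp.dia ∧ o ≠ HOp.box) →
      ∀ o ∈ l₄, ∃ y ≠ x, o = HOp.bind y := by
    rintro l₃ m l₄ rfl hnm
    exact exists_eq_bind_ne_of_forall_not_modal (fun o ho => hops₂ o (by simp [ho])) hnm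
      (fun h => hlast (by simp [h]))
  constructor
  · rintro ⟨W, K, hE, g, w, hsat⟩
    rw [applyOps_append] at hsat
    obtain ⟨g, w, hsat⟩ := exists_sat_of_sat_applyOps K hE.refl hsat
    simp only [applyOps, applyOp, Sat] at hsat
    rcases List.forall_or_eq_append_cons_forall (fun o => o ≠ HOp.dia ∧ o ≠ HOp.box) l₂ with
      hnm | ⟨l₃, m, l₄, rfl, hm, hnm⟩
    · have hbind := exists_eq_bind_ne_of_forall_not_modal hops₂ hnm hlast
      exact ((sat_applyOps_neg_svar_iff K hbind _ w).1 hsat (by simp [updAsg])).elim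
    rw [not_and_or, not_ne_iff, not_ne_iff] at hm
    rcases hm with rfl | rfl
    · exact ⟨l₃, l₄, rfl, hnm⟩
    rw [applyOps_append] at hsat
    have hw : K.rel w (updAsg g x w x) := by simpa [updAsg] using hE.refl w
    obtain ⟨g', w', hw', hbox⟩ := exists_sat_rel_svar_of_sat_applyOps K hE
      (fun o ho => hops₂ o (by simp [ho])) (fun h => hlast (by simp [h])) hw hsat
    exact ((sat_applyOps_neg_svar_iff K (hsuffix rfl hnm) g' _).1 (hbox _ hw') rfl).elim
  · rintro ⟨l₃, l₄, rfl, hnm⟩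
    refine ⟨Bool, completeBool, completeBool_equivalence, fun _ => false, false, ?_⟩
    rw [← List.cons_append, ← List.append_assoc, applyOps_append]
    refine sat_applyOps_of_forall_sat _ (fun w => ⟨w, trivial⟩) (fun g _ => ?_) _ _ _
    exact ⟨!(g x), trivial, (sat_applyOps_neg_svar_iff _ (hsuffix rfl hnm) g _).2 (by simp)⟩
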